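/- arXiv:2012.06762 — 4 statements merged into one kernel-verified Lean document; each statement's English description precedes it below -/
import Mathlib

section
/- Under the partially linear models E(Y|M,A,X,U)=θ1·M+θ2·A+g(X,U) and E(M|A,X,U)=θ3·A+h(X,U), together with the randomization condition A ⊥ U | X, one has E(Y−θ1·M−θ2·A | A,X) = E(g(X,U)|X) almost surely; in particular this conditional expectation does not depend on A. -/
/-!
Given `(M, A, X, U)`, the outcome model makes the residual `Y - θ1 M - θ2 A` have conditional
expectation `g (X, U)`, so by the tower property the residual and `g (X, U)` have the same
conditional expectation given `(A, X)`. It remains to drop `A`: if `m₁` and `m₂` are conditionally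
independent given `m' = σ(X)`, then `E[1_S | m₂ ⊔ m'] = E[1_S | m']` for every `S ∈ m₁ ⊔ m'`, and
testing an `(m₂ ⊔ m')`-measurable `f` against these indicators gives `E[f | m₁ ⊔ m'] = E[f | m']`.
-/

open MeasureTheory ProbabilityTheory Set MeasurableSpace

section PiSystem

variable {Ω : Type*}

lemma isPiSystem_image2_inter (m₁ m₂ : MeasurableSpace Ω) :
    IsPiSystem (image2 (· ∩ ·) {s | MeasurableSet[m₁] s} {t | MeasurableSet[m₂] t}) := by
  rintro _ ⟨s₁, hs₁, t₁, ht₁, rfl⟩ _ ⟨s₂, hs₂, t₂, ht₂, rfl⟩ -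
  exact ⟨s₁ ∩ s₂, hs₁.inter hs₂, t₁ ∩ t₂, ht₁.inter ht₂, inter_inter_inter_comm _ _ _ _⟩

lemma generateFrom_image2_inter (m₁ m₂ : MeasurableSpace Ω) :
    generateFrom (image2 (· ∩ ·) {s | MeasurableSet[m₁] s} {t | MeasurableSet[m₂] t}) =
      m₁ ⊔ m₂ := by
  refine le_antisymm (generateFrom_le ?_) (sup_le ?_ ?_)
  · rintro _ ⟨s, hs, t, ht, rfl⟩
    exact (le_sup_left (b := m₂) s hs).inter (le_sup_right (a := m₁) t ht)
  · exact fun s hs => measurableSet_generateFrom ⟨s, hs, univ, .univ, inter_univ s⟩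
  · exact fun t ht => measurableSet_generateFrom ⟨univ, .univ, t, ht, univ_inter t⟩

end PiSystem

section CondExp

variable {Ω : Type*} {m mΩ : MeasurableSpace Ω} {μ : Measure Ω} [IsFiniteMeasure μ]
  {f : Ω → ℝ} {s t : Set Ω}

lemma condExp_inter_of_measurableSet_left (hs : MeasurableSet[m] s) (ht : MeasurableSet t) :
    μ⟦s ∩ t | m⟧ =ᵐ[μ] s.indicator (μ⟦t | m⟧) := by
  rw [← indicator_indicator]
  exact condExp_indicator ((integrable_const (1 : ℝ)).indicator ht) hs

lemma setIntegral_condExp_eq_integral_condExp_indicator_mul (hm : m ≤ mΩ) (ht : MeasurableSet t) :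
    ∫ ω in t, μ[f | m] ω ∂μ = ∫ ω, (μ⟦t | m⟧ * μ[f | m]) ω ∂μ := by
  have hmul : t.indicator (fun _ => (1 : ℝ)) * μ[f | m] = t.indicator μ[f | m] := by
    ext ω; by_cases hω : ω ∈ t <;> simp [hω]
  rw [← integral_indicator ht, ← hmul, ← integral_condExp hm]
  refine integral_congr_ae (condExp_mul_of_stronglyMeasurable_right stronglyMeasurable_condExp ?_
    ((integrable_const 1).indicator ht))
  rw [hmul]
  exact integrable_condExp.indicator ht

lemma integral_condExp_indicator_mul_condExp (hm : m ≤ mΩ) (hf : Integrable f μ) :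
    ∫ ω, (μ⟦t | m⟧ * μ[f | m]) ω ∂μ = ∫ ω, (μ⟦t | m⟧ * f) ω ∂μ := by
  have hbdd : ∀ᵐ ω ∂μ, ‖(μ⟦t | m⟧) ω‖ ≤ 1 :=
    ae_bdd_abs_condExp_of_ae_bdd_abs (ae_of_all _ fun ω => by
      by_cases hω : ω ∈ t <;> simp [hω])
  rw [← integral_condExp hm (f := μ⟦t | m⟧ * f)]
  exact integral_congr_ae
    (condExp_stronglyMeasurable_mul_of_bound hm stronglyMeasurable_condExp hf 1 hbdd).symm

lemma condExp_sub_eq_of_condExp_eq_add {Y Z g : Ω → ℝ} (hm : m ≤ mΩ)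
    (hY : Integrable Y μ) (hZm : StronglyMeasurable[m] Z) (hZ : Integrable Z μ)
    (h : μ[Y | m] =ᵐ[μ] Z + g) :
    μ[Y - Z | m] =ᵐ[μ] g := by
  filter_upwards [condExp_sub hY hZ m, h] with ω hsub hω
  rw [hsub, Pi.sub_apply, hω, condExp_of_stronglyMeasurable hm hZm hZ, Pi.add_apply]
  ring

end CondExp

section CondIndep

variable {Ω : Type*} {m' m₁ m₂ mΩ : MeasurableSpace Ω} [StandardBorelSpace Ω] {hm' : m' ≤ mΩ}
  {μ : Measure Ω} [IsFiniteMeasure μ]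

theorem CondIndep.sup_conditioning_right (h : CondIndep m' m₁ m₂ hm' μ) (hm₁ : m₁ ≤ mΩ)
    (hm₂ : m₂ ≤ mΩ) : CondIndep m' m₁ (m₂ ⊔ m') hm' μ := by
  refine CondIndepSets.condIndep hm₁ (sup_le hm₂ hm') (@isPiSystem_measurableSet Ω m₁)
    (isPiSystem_image2_inter m₂ m') (@generateFrom_measurableSet _ m₁).symm
    (generateFrom_image2_inter m₂ m').symm ?_
  have hmeas : ∀ u ∈ image2 (· ∩ ·) {s | MeasurableSet[m₂] s} {r | MeasurableSet[m'] r},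
      MeasurableSet u := by
    rintro _ ⟨t, ht, r, hr, rfl⟩
    exact (hm₂ t ht).inter (hm' r hr)
  refine (condIndepSets_iff m' hm' _ _ (fun s hs => hm₁ s hs) hmeas μ).mpr ?_
  rintro s _ hs ⟨t, ht, r, hr, rfl⟩
  have hst := (condIndep_iff m' m₁ m₂ hm' hm₁ hm₂ μ).mp h s t hs ht
  calc μ⟦s ∩ (t ∩ r) | m'⟧
      =ᵐ[μ] μ⟦r ∩ (s ∩ t) | m'⟧ := by rw [inter_comm r, inter_assoc]
    _ =ᵐ[μ] r.indicator (μ⟦s ∩ t | m'⟧) :=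
        condExp_inter_of_measurableSet_left hr ((hm₁ s hs).inter (hm₂ t ht))
    _ =ᵐ[μ] r.indicator (μ⟦s | m'⟧ * μ⟦t | m'⟧) := hst.indicator
    _ = μ⟦s | m'⟧ * r.indicator (μ⟦t | m'⟧) := funext fun _ => indicator_mul_right _ _ _
    _ =ᵐ[μ] μ⟦s | m'⟧ * μ⟦t ∩ r | m'⟧ := by
        rw [inter_comm t]
        exact Filter.EventuallyEq.rfl.mul (condExp_inter_of_measurableSet_left hr (hm₂ t ht)).symm

theorem CondIndep.sup_conditioning_left (h : CondIndep m' m₁ m₂ hm' μ) (hm₁ : m₁ ≤ mΩ)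
    (hm₂ : m₂ ≤ mΩ) : CondIndep m' (m₁ ⊔ m') m₂ hm' μ :=
  CondIndep.symm (CondIndep.sup_conditioning_right (CondIndep.symm h) hm₂ hm₁)

theorem CondIndep.condExp_indicator_eq (h : CondIndep m' m₁ m₂ hm' μ) (hm₁ : m₁ ≤ mΩ)
    (hm₂ : m₂ ≤ mΩ) (hle : m' ≤ m₂) {s : Set Ω} (hs : MeasurableSet[m₁] s) :
    μ⟦s | m₂⟧ =ᵐ[μ] μ⟦s | m'⟧ := by
  refine (ae_eq_condExp_of_forall_setIntegral_eq hm₂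
    ((integrable_const (1 : ℝ)).indicator (hm₁ s hs)) (fun _ _ _ => integrable_condExp.integrableOn)
    (fun t ht _ => ?_) (stronglyMeasurable_condExp.mono hle).aestronglyMeasurable).symm
  have hst := (condIndep_iff m' m₁ m₂ hm' hm₁ hm₂ μ).mp h s t hs ht
  calc ∫ ω in t, (μ⟦s | m'⟧) ω ∂μ
      = ∫ ω, (μ⟦t | m'⟧ * μ⟦s | m'⟧) ω ∂μ :=
        setIntegral_condExp_eq_integral_condExp_indicator_mul hm' (hm₂ t ht)
    _ = ∫ ω, (μ⟦s ∩ t | m'⟧) ω ∂μ := by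
        rw [mul_comm]
        exact integral_congr_ae hst.symm
    _ = ∫ ω, (s ∩ t).indicator (fun _ => (1 : ℝ)) ω ∂μ := integral_condExp hm'
    _ = ∫ ω in t, s.indicator (fun _ => (1 : ℝ)) ω ∂μ := by
        rw [← integral_indicator (hm₂ t ht), indicator_indicator, inter_comm]

theorem CondIndep.condExp_sup_eq (h : CondIndep m' m₁ m₂ hm' μ) (hm₁ : m₁ ≤ mΩ)
    (hm₂ : m₂ ≤ mΩ) {f : Ω → ℝ} (hf : StronglyMeasurable[m₂ ⊔ m'] f) (hfi : Integrable f μ) :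
    μ[f | m₁ ⊔ m'] =ᵐ[μ] μ[f | m'] := by
  have hm₁' : m₁ ⊔ m' ≤ mΩ := sup_le hm₁ hm'
  have hm₂' : m₂ ⊔ m' ≤ mΩ := sup_le hm₂ hm'
  have hindep := CondIndep.sup_conditioning_left
    (CondIndep.sup_conditioning_right h hm₁ hm₂) hm₁ hm₂'
  have hf_eq : μ[f | m₂ ⊔ m'] = f := condExp_of_stronglyMeasurable hm₂' hf hfi
  refine (ae_eq_condExp_of_forall_setIntegral_eq hm₁' hfi
    (fun _ _ _ => integrable_condExp.integrableOn) (fun S hS _ => ?_)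
    (stronglyMeasurable_condExp.mono (le_sup_right : m' ≤ m₁ ⊔ m')).aestronglyMeasurable).symm
  have hSΩ := hm₁' S hS
  calc ∫ ω in S, μ[f | m'] ω ∂μ
      = ∫ ω, (μ⟦S | m'⟧ * μ[f | m']) ω ∂μ :=
        setIntegral_condExp_eq_integral_condExp_indicator_mul hm' hSΩ
    _ = ∫ ω, (μ⟦S | m'⟧ * f) ω ∂μ := integral_condExp_indicator_mul_condExp hm' hfi
    _ = ∫ ω, (μ⟦S | m₂ ⊔ m'⟧ * μ[f | m₂ ⊔ m']) ω ∂μ := by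
        rw [hf_eq]
        exact integral_congr_ae
          ((CondIndep.condExp_indicator_eq hindep hm₁' hm₂' le_sup_right hS).symm.mul .rfl)
    _ = ∫ ω in S, f ω ∂μ := by
        rw [← setIntegral_condExp_eq_integral_condExp_indicator_mul hm₂' hSΩ, hf_eq]

end CondIndep

theorem stmt1_general {Ω 𝓧 𝓤 : Type*} {mΩ : MeasurableSpace Ω} [StandardBorelSpace Ω] [Nonempty Ω]
    {m𝓧 : MeasurableSpace 𝓧} {m𝓤 : MeasurableSpace 𝓤}
    (μ : Measure Ω) [IsProbabilityMeasure μ]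
    (Y A M : Ω → ℝ) (X : Ω → 𝓧) (U : Ω → 𝓤)
    (hAm : Measurable A) (hMm : Measurable M)
    (hXm : Measurable X) (hUm : Measurable U)
    (hY : Integrable Y μ) (hA : Integrable A μ) (hM : Integrable M μ)
    (θ1 θ2 : ℝ) (g : 𝓧 × 𝓤 → ℝ) (hg : Measurable g)
    (hgi : Integrable (fun ω => g (X ω, U ω)) μ)
    (hout : μ[Y | MeasurableSpace.comap (fun ω => (M ω, A ω, X ω, U ω)) inferInstance]
        =ᵐ[μ] fun ω => θ1 * M ω + θ2 * A ω + g (X ω, U ω))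
    (hAU : CondIndepFun (MeasurableSpace.comap X m𝓧) hXm.comap_le A U μ) :
    μ[fun ω => Y ω - θ1 * M ω - θ2 * A ω
        | MeasurableSpace.comap (fun ω => (A ω, X ω)) inferInstance]
      =ᵐ[μ] μ[fun ω => g (X ω, U ω) | MeasurableSpace.comap X m𝓧] := by
  have hQm : Measurable (fun ω => (M ω, A ω, X ω, U ω)) := by fun_prop
  have hAX_le : MeasurableSpace.comap (fun ω => (A ω, X ω)) inferInstance ≤
      MeasurableSpace.comap (fun ω => (M ω, A ω, X ω, U ω)) inferInstance :=
    Measurable.comap_le (f := fun ω => (A ω, X ω))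
      ((measurable_snd.fst.prodMk measurable_snd.snd.fst).comp (comap_measurable _))
  have hres : μ[fun ω => Y ω - θ1 * M ω - θ2 * A ω
      | MeasurableSpace.comap (fun ω => (M ω, A ω, X ω, U ω)) inferInstance]
        =ᵐ[μ] fun ω => g (X ω, U ω) := by
    have hZm : Measurable[MeasurableSpace.comap (fun ω => (M ω, A ω, X ω, U ω)) inferInstance]
        (fun ω => θ1 * M ω + θ2 * A ω) :=
      ((measurable_fst.const_mul θ1).add (measurable_snd.fst.const_mul θ2)).comp
        (comap_measurable _)
    rw [show (fun ω => Y ω - θ1 * M ω - θ2 * A ω) = Y - fun ω => θ1 * M ω + θ2 * A ω by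
      ext; simp only [Pi.sub_apply]; ring]
    exact condExp_sub_eq_of_condExp_eq_add hQm.comap_le hY hZm.stronglyMeasurable
      ((hM.const_mul θ1).add (hA.const_mul θ2)) hout
  have hgXU : StronglyMeasurable[MeasurableSpace.comap U m𝓤 ⊔ MeasurableSpace.comap X m𝓧]
      (fun ω => g (X ω, U ω)) := by
    rw [sup_comm, ← MeasurableSpace.comap_prodMk]
    exact (hg.comp (comap_measurable _)).stronglyMeasurable
  have hdrop := CondIndep.condExp_sup_eq ((condIndepFun_iff_condIndep _ _ A U μ).mp hAU)
    hAm.comap_le hUm.comap_le hgXU hgi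
  rw [← MeasurableSpace.comap_prodMk] at hdrop
  calc μ[fun ω => Y ω - θ1 * M ω - θ2 * A ω | MeasurableSpace.comap (fun ω => (A ω, X ω)) _]
      =ᵐ[μ] μ[μ[fun ω => Y ω - θ1 * M ω - θ2 * A ω
        | MeasurableSpace.comap (fun ω => (M ω, A ω, X ω, U ω)) _]
        | MeasurableSpace.comap (fun ω => (A ω, X ω)) _] :=
        (condExp_condExp_of_le hAX_le hQm.comap_le).symm
    _ =ᵐ[μ] μ[fun ω => g (X ω, U ω) | MeasurableSpace.comap (fun ω => (A ω, X ω)) _] :=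
        condExp_congr_ae hres
    _ =ᵐ[μ] μ[fun ω => g (X ω, U ω) | MeasurableSpace.comap X m𝓧] := hdrop

/-- Under the partially linear models and the randomization condition
`A ⊥ U | X`, one has `E(Y − θ1·M − θ2·A | A,X) = E(g(X,U)|X) =: g*(X)` a.s.;
in particular this conditional expectation does not depend on `A`. -/
theorem stmt1 {Ω 𝓧 𝓤 : Type*} {mΩ : MeasurableSpace Ω} [StandardBorelSpace Ω] [Nonempty Ω]
    {m𝓧 : MeasurableSpace 𝓧} {m𝓤 : MeasurableSpace 𝓤}
    (μ : Measure Ω) [IsProbabilityMeasure μ]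
    (Y A M : Ω → ℝ) (X : Ω → 𝓧) (U : Ω → 𝓤)
    (hYm : Measurable Y) (hAm : Measurable A) (hMm : Measurable M)
    (hXm : Measurable X) (hUm : Measurable U)
    (hY : Integrable Y μ) (hA : Integrable A μ) (hM : Integrable M μ)
    (θ1 θ2 θ3 : ℝ) (g h : 𝓧 × 𝓤 → ℝ) (hg : Measurable g) (hh : Measurable h)
    (hgi : Integrable (fun ω => g (X ω, U ω)) μ)
    (hhi : Integrable (fun ω => h (X ω, U ω)) μ)
    (hout : μ[Y | MeasurableSpace.comap (fun ω => (M ω, A ω, X ω, U ω)) inferInstance]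
        =ᵐ[μ] fun ω => θ1 * M ω + θ2 * A ω + g (X ω, U ω))
    (hmed : μ[M | MeasurableSpace.comap (fun ω => (A ω, X ω, U ω)) inferInstance]
        =ᵐ[μ] fun ω => θ3 * A ω + h (X ω, U ω))
    (hAU : CondIndepFun (MeasurableSpace.comap X m𝓧) hXm.comap_le A U μ) :
    μ[fun ω => Y ω - θ1 * M ω - θ2 * A ω
        | MeasurableSpace.comap (fun ω => (A ω, X ω)) inferInstance]
      =ᵐ[μ] μ[fun ω => g (X ω, U ω) | MeasurableSpace.comap X m𝓧] :=
  stmt1_general (mΩ := mΩ) (m𝓤 := m𝓤) μ Y A M X U hAm hMm hXm hUm hY hA hM θ1 θ2 g hg hgi hout hAU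
end

section
/- Let ψ(O;θ,h*) be the 3-vector with components ψ1=Y−θ1·M−θ2·A, ψ2=(M−θ3·A−h*(X))·(Y−θ1·M), ψ3=M−θ3·A. Under the partially linear models and A ⊥ U | X, E(ψ(O;θ,h*)|A,X) = E(ψ(O;θ,h*)|X) almost surely (Lemma 2.1). -/
/-!
Conditional independence `A ⊥ U | X` gives `E[f | A, X] = E[f | X]` for every integrable
`σ(X, U)`-measurable `f`: a π-λ argument over the rectangles of `σ(X) ⊔ σ(A)`, run first for
indicators of `U`-events and then for general `f`. By the partially linear models,
`E[ψ₁ | M, A, X, U] = g(X, U)` and `E[ψ₃ | A, X, U] = h(X, U)`, so the tower property reduces `ψ₁`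
and `ψ₃` to that fact. For `ψ₂`, conditioning successively on `(M, A, X, U)` and `(A, X, U)` gives
`(θ₂ A + g) (h − h*)`; here `g (h − h*)` is `σ(X, U)`-measurable, while `A (h − h*)` has conditional
expectation zero given `(A, X)` because `E[h − h* | A, X] = E[h − h* | X] = 0`.
-/

open MeasureTheory ProbabilityTheory

namespace MeasurableSpace

variable {Ω : Type*}

lemma isPiSystem_image2_inter (m₁ m₂ : MeasurableSpace Ω) :
    IsPiSystem (Set.image2 (· ∩ ·) {s | MeasurableSet[m₁] s} {s | MeasurableSet[m₂] s}) := by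
  rintro _ ⟨a, ha, b, hb, rfl⟩ _ ⟨a', ha', b', hb', rfl⟩ -
  exact ⟨a ∩ a', ha.inter ha', b ∩ b', hb.inter hb', (Set.inter_inter_inter_comm a b a' b').symm⟩

lemma generateFrom_image2_inter (m₁ m₂ : MeasurableSpace Ω) :
    generateFrom (Set.image2 (· ∩ ·) {s | MeasurableSet[m₁] s} {s | MeasurableSet[m₂] s})
      = m₁ ⊔ m₂ := by
  refine le_antisymm (generateFrom_le ?_) (sup_le ?_ ?_)
  · rintro _ ⟨a, ha, b, hb, rfl⟩
    exact (le_sup_left (b := m₂) _ ha).inter (le_sup_right (a := m₁) _ hb)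
  · exact fun a ha ↦ measurableSet_generateFrom ⟨a, ha, Set.univ, .univ, Set.inter_univ a⟩
  · exact fun b hb ↦ measurableSet_generateFrom ⟨Set.univ, .univ, b, hb, Set.univ_inter b⟩

end MeasurableSpace

section CondIndep

variable {Ω : Type*} {m m₀ m₁ m₂ mΩ : MeasurableSpace Ω} {μ : Measure Ω}

lemma condExp_indicator_ae_eq_mul [IsFiniteMeasure μ] {φ : Ω → ℝ}
    (hφ : StronglyMeasurable[m] φ) (hφi : Integrable φ μ) {s : Set Ω} (hs : MeasurableSet s) :
    μ[s.indicator φ | m] =ᵐ[μ] φ * μ⟦s | m⟧ := by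
  have hmul : s.indicator φ = φ * s.indicator fun _ ↦ (1 : ℝ) := by
    ext x; by_cases hx : x ∈ s <;> simp [hx]
  rw [hmul]
  exact condExp_mul_of_stronglyMeasurable_left hφ (hmul ▸ hφi.indicator hs)
    ((integrable_const 1).indicator hs)

theorem condExp_sup_ae_eq_of_forall_condExp_indicator [IsFiniteMeasure μ] (hm : m ≤ mΩ)
    (hm₁ : m₁ ≤ mΩ) {f : Ω → ℝ} (hf : Integrable f μ)
    (h : ∀ b, MeasurableSet[m₁] b → μ[b.indicator f | m] =ᵐ[μ] μ[f | m] * μ⟦b | m⟧) :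
    μ[f | m ⊔ m₁] =ᵐ[μ] μ[f | m] := by
  have hsup : m ⊔ m₁ ≤ mΩ := sup_le hm hm₁
  have hfm : StronglyMeasurable[m ⊔ m₁] (μ[f | m]) := stronglyMeasurable_condExp.mono le_sup_left
  refine (ae_eq_condExp_of_forall_setIntegral_eq hsup hf
    (fun _ _ _ ↦ integrable_condExp.integrableOn) (fun t ht hμt ↦ ?_)
    hfm.aestronglyMeasurable).symm
  clear hμt
  induction t, ht using MeasurableSpace.induction_on_inter
    (MeasurableSpace.generateFrom_image2_inter m m₁).symm
    (MeasurableSpace.isPiSystem_image2_inter m m₁) with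
  | empty => simp
  | basic t ht =>
    obtain ⟨a, ha, b, hb, rfl⟩ := ht
    have hb' : MeasurableSet b := hm₁ b hb
    calc ∫ x in a ∩ b, μ[f | m] x ∂μ
        = ∫ x in a, μ[b.indicator (μ[f | m]) | m] x ∂μ := by
          rw [setIntegral_condExp hm (integrable_condExp.indicator hb') ha,
            setIntegral_indicator hb']
      _ = ∫ x in a, μ[b.indicator f | m] x ∂μ := setIntegral_congr_ae (hm a ha)
          (((condExp_indicator_ae_eq_mul stronglyMeasurable_condExp integrable_condExp hb').trans
            (h b hb).symm).mono fun x hx _ ↦ hx)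
      _ = ∫ x in a ∩ b, f x ∂μ := by
          rw [setIntegral_condExp hm (hf.indicator hb') ha, setIntegral_indicator hb']
  | compl t ht iht =>
    have ht' : MeasurableSet t := hsup t ht
    have h₁ := integral_add_compl ht' (integrable_condExp (m := m) (f := f) (μ := μ))
    have h₂ := integral_add_compl ht' hf
    have h₃ : ∫ x, μ[f | m] x ∂μ = ∫ x, f x ∂μ := integral_condExp hm
    linarith
  | iUnion t hdisj ht iht =>
    rw [integral_iUnion (fun i ↦ hsup _ (ht i)) hdisj integrable_condExp.integrableOn,
      integral_iUnion (fun i ↦ hsup _ (ht i)) hdisj hf.integrableOn]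
    exact tsum_congr iht

theorem condExp_indicator_sup_ae_eq_of_condIndep [StandardBorelSpace Ω] [IsFiniteMeasure μ]
    (hm : m ≤ mΩ) (hm₁ : m₁ ≤ mΩ) (hm₂ : m₂ ≤ mΩ) (h : CondIndep m m₁ m₂ hm μ) {t : Set Ω}
    (ht : MeasurableSet[m₂] t) :
    μ⟦t | m ⊔ m₁⟧ =ᵐ[μ] μ⟦t | m⟧ := by
  refine condExp_sup_ae_eq_of_forall_condExp_indicator hm hm₁
    ((integrable_const 1).indicator (hm₂ t ht)) fun b hb ↦ ?_
  rw [Set.indicator_indicator, mul_comm]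
  exact (condIndep_iff m m₁ m₂ hm hm₁ hm₂ μ).mp h b t hb ht

theorem condExp_sup_ae_eq_of_condIndep [StandardBorelSpace Ω] [IsFiniteMeasure μ]
    (hm : m ≤ mΩ) (hm₁ : m₁ ≤ mΩ) (hm₂ : m₂ ≤ mΩ) (h : CondIndep m m₁ m₂ hm μ) {f : Ω → ℝ}
    (hf : Integrable f μ) (hfm : AEStronglyMeasurable[m ⊔ m₁] f μ) :
    μ[f | m ⊔ m₂] =ᵐ[μ] μ[f | m] := by
  refine condExp_sup_ae_eq_of_forall_condExp_indicator hm hm₂ hf fun b hb ↦ ?_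
  have hb' : MeasurableSet b := hm₂ b hb
  have hind : Integrable (b.indicator fun _ ↦ (1 : ℝ)) μ := (integrable_const 1).indicator hb'
  have hmul : b.indicator f = f * b.indicator fun _ ↦ (1 : ℝ) := by
    ext x; by_cases hx : x ∈ b <;> simp [hx]
  calc μ[b.indicator f | m]
      =ᵐ[μ] μ[μ[f * b.indicator fun _ ↦ (1 : ℝ) | m ⊔ m₁] | m] := by
        rw [hmul]; exact (condExp_condExp_of_le le_sup_left (sup_le hm hm₁)).symm
    _ =ᵐ[μ] μ[f * μ⟦b | m ⊔ m₁⟧ | m] := condExp_congr_ae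
        (condExp_mul_of_aestronglyMeasurable_left hfm (hmul ▸ hf.indicator hb') hind)
    _ =ᵐ[μ] μ[μ⟦b | m⟧ * f | m] := condExp_congr_ae <| by
        filter_upwards [condExp_indicator_sup_ae_eq_of_condIndep hm hm₁ hm₂ h hb] with x hx
        simp only [Pi.mul_apply, hx, mul_comm]
    _ =ᵐ[μ] μ⟦b | m⟧ * μ[f | m] := condExp_stronglyMeasurable_mul_of_bound hm
        stronglyMeasurable_condExp hf 1 (ae_bdd_norm_condExp_of_ae_bdd_norm (.of_forall fun x ↦
          by simpa using norm_indicator_le_norm_self (fun _ ↦ (1 : ℝ)) x))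
    _ = μ[f | m] * μ⟦b | m⟧ := mul_comm _ _

lemma condExp_sub_ae_eq_of_condExp_ae_eq_add (hm : m ≤ mΩ) [SigmaFinite (μ.trim hm)]
    {Z V φ : Ω → ℝ} (hZ : Integrable Z μ) (hV : StronglyMeasurable[m] V) (hVi : Integrable V μ)
    (hZV : μ[Z | m] =ᵐ[μ] V + φ) :
    μ[Z - V | m] =ᵐ[μ] φ := by
  filter_upwards [condExp_sub hZ hVi m, hZV] with ω hsub hZω
  simp [hsub, condExp_of_stronglyMeasurable hm hV hVi, hZω]

lemma condExp_ae_eq_condExp_of_condExp_ae_eq (h₀ : m₀ ≤ m) (h₁ : m₁ ≤ m) (hm : m ≤ mΩ)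
    [SigmaFinite (μ.trim hm)] {ψ φ : Ω → ℝ} (hψ : μ[ψ | m] =ᵐ[μ] φ)
    (hφ : μ[φ | m₁] =ᵐ[μ] μ[φ | m₀]) :
    μ[ψ | m₁] =ᵐ[μ] μ[ψ | m₀] :=
  calc μ[ψ | m₁] =ᵐ[μ] μ[μ[ψ | m] | m₁] := (condExp_condExp_of_le h₁ hm).symm
    _ =ᵐ[μ] μ[φ | m₁] := condExp_congr_ae hψ
    _ =ᵐ[μ] μ[φ | m₀] := hφ
    _ =ᵐ[μ] μ[μ[ψ | m] | m₀] := condExp_congr_ae hψ.symm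
    _ =ᵐ[μ] μ[ψ | m₀] := condExp_condExp_of_le h₀ hm

end CondIndep

section PartiallyLinearModel

variable {Ω β 𝓧 𝓤 : Type*} {mΩ : MeasurableSpace Ω} {mβ : MeasurableSpace β}
  {m𝓧 : MeasurableSpace 𝓧} {m𝓤 : MeasurableSpace 𝓤} {μ : Measure Ω}
  {X : Ω → 𝓧} {U : Ω → 𝓤}

theorem condExp_comap_prodMk_ae_eq_of_condIndepFun [StandardBorelSpace Ω] [IsFiniteMeasure μ]
    {A : Ω → β} (hAm : Measurable A) (hXm : Measurable X) (hUm : Measurable U)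
    (hAU : CondIndepFun (MeasurableSpace.comap X m𝓧) hXm.comap_le A U μ) {f : Ω → ℝ}
    (hf : Integrable f μ)
    (hfm : AEStronglyMeasurable[MeasurableSpace.comap (fun ω ↦ (X ω, U ω)) inferInstance] f μ) :
    μ[f | MeasurableSpace.comap (fun ω ↦ (A ω, X ω)) inferInstance]
      =ᵐ[μ] μ[f | MeasurableSpace.comap X m𝓧] := by
  have hXU : MeasurableSpace.comap (fun ω ↦ (X ω, U ω)) inferInstance
      = MeasurableSpace.comap X m𝓧 ⊔ MeasurableSpace.comap U m𝓤 :=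
    MeasurableSpace.comap_prodMk X U
  have hAX : MeasurableSpace.comap (fun ω ↦ (A ω, X ω)) inferInstance
      = MeasurableSpace.comap X m𝓧 ⊔ MeasurableSpace.comap A mβ :=
    (MeasurableSpace.comap_prodMk A X).trans (sup_comm _ _)
  rw [hXU] at hfm
  rw [hAX]
  exact condExp_sup_ae_eq_of_condIndep hXm.comap_le hUm.comap_le hAm.comap_le
    ((condIndepFun_iff_condIndep _ _ _ _ _).mp hAU.symm) hf hfm

theorem condExp_residual_ae_eq_of_condExp_ae_eq_add [StandardBorelSpace Ω] [IsFiniteMeasure μ]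
    {A : Ω → β} (hAm : Measurable A) (hXm : Measurable X) (hUm : Measurable U)
    (hAU : CondIndepFun (MeasurableSpace.comap X m𝓧) hXm.comap_le A U μ) {m : MeasurableSpace Ω}
    (hAX : MeasurableSpace.comap (fun ω ↦ (A ω, X ω)) inferInstance ≤ m) (hm : m ≤ mΩ)
    {Z V : Ω → ℝ} {φ : 𝓧 × 𝓤 → ℝ} (hφ : Measurable φ) (hφi : Integrable (fun ω ↦ φ (X ω, U ω)) μ)
    (hZ : Integrable Z μ) (hV : StronglyMeasurable[m] V) (hVi : Integrable V μ)
    (hZV : μ[Z | m] =ᵐ[μ] V + fun ω ↦ φ (X ω, U ω)) :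
    μ[Z - V | MeasurableSpace.comap (fun ω ↦ (A ω, X ω)) inferInstance]
      =ᵐ[μ] μ[Z - V | MeasurableSpace.comap X m𝓧] :=
  condExp_ae_eq_condExp_of_condExp_ae_eq
    ((comap_measurable (m := (inferInstance : MeasurableSpace (β × 𝓧))) _).snd.comap_le.trans hAX)
    hAX hm (condExp_sub_ae_eq_of_condExp_ae_eq_add hm hZ hV hVi hZV)
    (condExp_comap_prodMk_ae_eq_of_condIndepFun hAm hXm hUm hAU hφi
      (hφ.comp (comap_measurable _)).aestronglyMeasurable)

theorem condExp_mul_centered_ae_eq [StandardBorelSpace Ω] [IsFiniteMeasure μ] {A : Ω → ℝ}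
    (hAm : Measurable A) (hXm : Measurable X) (hUm : Measurable U)
    (hAU : CondIndepFun (MeasurableSpace.comap X m𝓧) hXm.comap_le A U μ) (hA : MemLp A 2 μ)
    {G H : Ω → ℝ} (hG : MemLp G 2 μ)
    (hGm : StronglyMeasurable[MeasurableSpace.comap (fun ω ↦ (X ω, U ω)) inferInstance] G)
    (hH : MemLp H 2 μ)
    (hHm : StronglyMeasurable[MeasurableSpace.comap (fun ω ↦ (X ω, U ω)) inferInstance] H)
    (θ : ℝ) :
    μ[fun ω ↦ (θ * A ω + G ω) * (H ω - μ[H | MeasurableSpace.comap X m𝓧] ω)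
        | MeasurableSpace.comap (fun ω ↦ (A ω, X ω)) inferInstance]
      =ᵐ[μ] μ[fun ω ↦ (θ * A ω + G ω) * (H ω - μ[H | MeasurableSpace.comap X m𝓧] ω)
        | MeasurableSpace.comap X m𝓧] := by
  set mX := MeasurableSpace.comap X m𝓧
  set mAX := MeasurableSpace.comap (fun ω ↦ (A ω, X ω)) (inferInstance : MeasurableSpace (ℝ × 𝓧))
  have hAXm := comap_measurable (m := (inferInstance : MeasurableSpace (ℝ × 𝓧)))
    (fun ω ↦ (A ω, X ω))
  have hXUm := comap_measurable (m := (inferInstance : MeasurableSpace (𝓧 × 𝓤)))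
    (fun ω ↦ (X ω, U ω))
  have hmAX : mAX ≤ mΩ := (hAm.prodMk hXm).comap_le
  have hX_AX : mX ≤ mAX := hAXm.snd.comap_le
  set k := fun ω ↦ H ω - μ[H | mX] ω
  have hk : MemLp k 2 μ := hH.sub (hH.condExp one_le_two)
  have hkm : StronglyMeasurable[MeasurableSpace.comap (fun ω ↦ (X ω, U ω)) inferInstance] k :=
    hHm.sub (stronglyMeasurable_condExp.mono hXUm.fst.comap_le)
  have hk_X : μ[k | mX] =ᵐ[μ] 0 :=
    condExp_sub_ae_eq_of_condExp_ae_eq_add hXm.comap_le (hH.integrable one_le_two)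
      stronglyMeasurable_condExp integrable_condExp (.of_forall fun _ ↦ (add_zero _).symm)
  have hAk_AX : μ[(fun ω ↦ θ * A ω) * k | mAX] =ᵐ[μ] 0 := by
    filter_upwards [condExp_mul_of_stronglyMeasurable_left
      (hAXm.fst.const_mul θ).stronglyMeasurable ((hA.const_mul θ).integrable_mul hk)
      (hk.integrable one_le_two),
      (condExp_comap_prodMk_ae_eq_of_condIndepFun hAm hXm hUm hAU (hk.integrable one_le_two)
        hkm.aestronglyMeasurable).trans hk_X] with ω hω hkω
    exact hω.trans (by simp [hkω])
  have hAk_X : μ[(fun ω ↦ θ * A ω) * k | mX] =ᵐ[μ] 0 :=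
    calc μ[(fun ω ↦ θ * A ω) * k | mX]
        =ᵐ[μ] μ[μ[(fun ω ↦ θ * A ω) * k | mAX] | mX] := (condExp_condExp_of_le hX_AX hmAX).symm
      _ =ᵐ[μ] μ[0 | mX] := condExp_congr_ae hAk_AX
      _ = 0 := condExp_zero
  have hGk : μ[G * k | mAX] =ᵐ[μ] μ[G * k | mX] :=
    condExp_comap_prodMk_ae_eq_of_condIndepFun hAm hXm hUm hAU (hG.integrable_mul hk)
      (hGm.mul hkm).aestronglyMeasurable
  have hsplit : (fun ω ↦ (θ * A ω + G ω) * k ω) = (fun ω ↦ θ * A ω) * k + G * k := by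
    ext ω; simp only [Pi.add_apply, Pi.mul_apply]; ring
  have hAk_int : Integrable ((fun ω ↦ θ * A ω) * k) μ := (hA.const_mul θ).integrable_mul hk
  rw [hsplit]
  calc μ[(fun ω ↦ θ * A ω) * k + G * k | mAX]
      =ᵐ[μ] μ[(fun ω ↦ θ * A ω) * k | mAX] + μ[G * k | mAX] :=
        condExp_add hAk_int (hG.integrable_mul hk) mAX
    _ =ᵐ[μ] μ[(fun ω ↦ θ * A ω) * k | mX] + μ[G * k | mX] :=
        (hAk_AX.trans hAk_X.symm).add hGk
    _ =ᵐ[μ] μ[(fun ω ↦ θ * A ω) * k + G * k | mX] :=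
        (condExp_add hAk_int (hG.integrable_mul hk) mX).symm

theorem condExp_mediator_outcome_residual_ae_eq [StandardBorelSpace Ω] [IsFiniteMeasure μ]
    {Y A M : Ω → ℝ} (hAm : Measurable A) (hMm : Measurable M) (hXm : Measurable X)
    (hUm : Measurable U) (hAU : CondIndepFun (MeasurableSpace.comap X m𝓧) hXm.comap_le A U μ)
    (hY : MemLp Y 2 μ) (hA : MemLp A 2 μ) (hM : MemLp M 2 μ) (θ1 θ2 θ3 : ℝ)
    {g h : 𝓧 × 𝓤 → ℝ} (hg : Measurable g) (hh : Measurable h)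
    (hgi : MemLp (fun ω ↦ g (X ω, U ω)) 2 μ) (hhi : MemLp (fun ω ↦ h (X ω, U ω)) 2 μ)
    (hout : μ[Y | MeasurableSpace.comap (fun ω ↦ (M ω, A ω, X ω, U ω)) inferInstance]
        =ᵐ[μ] fun ω ↦ θ1 * M ω + θ2 * A ω + g (X ω, U ω))
    (hmed : μ[M | MeasurableSpace.comap (fun ω ↦ (A ω, X ω, U ω)) inferInstance]
        =ᵐ[μ] fun ω ↦ θ3 * A ω + h (X ω, U ω)) :
    μ[fun ω ↦ (M ω - θ3 * A ω - μ[fun ω ↦ h (X ω, U ω) | MeasurableSpace.comap X m𝓧] ω)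
          * (Y ω - θ1 * M ω) | MeasurableSpace.comap (fun ω ↦ (A ω, X ω)) inferInstance]
      =ᵐ[μ] μ[fun ω ↦ (M ω - θ3 * A ω - μ[fun ω ↦ h (X ω, U ω) | MeasurableSpace.comap X m𝓧] ω)
          * (Y ω - θ1 * M ω) | MeasurableSpace.comap X m𝓧] := by
  have hMAXUm := comap_measurable (m := (inferInstance : MeasurableSpace (ℝ × ℝ × 𝓧 × 𝓤)))
    (fun ω ↦ (M ω, A ω, X ω, U ω))
  have hAXUm := comap_measurable (m := (inferInstance : MeasurableSpace (ℝ × 𝓧 × 𝓤)))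
    (fun ω ↦ (A ω, X ω, U ω))
  have hXUm := comap_measurable (m := (inferInstance : MeasurableSpace (𝓧 × 𝓤)))
    (fun ω ↦ (X ω, U ω))
  set H := μ[fun ω ↦ h (X ω, U ω) | MeasurableSpace.comap X m𝓧]
  set W := fun ω ↦ Y ω - θ1 * M ω
  set D := M - fun ω ↦ θ3 * A ω + H ω
  set C := fun ω ↦ θ2 * A ω + g (X ω, U ω)
  have hH : MemLp H 2 μ := hhi.condExp one_le_two
  have hW : MemLp W 2 μ := hY.sub (hM.const_mul θ1)
  have hD : MemLp D 2 μ := hM.sub ((hA.const_mul θ3).add hH)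
  have hC : MemLp C 2 μ := (hA.const_mul θ2).add hgi
  have hHm := stronglyMeasurable_condExp (m := MeasurableSpace.comap X m𝓧) (μ := μ)
    (f := fun ω ↦ h (X ω, U ω))
  have hCW : μ[W | MeasurableSpace.comap (fun ω ↦ (M ω, A ω, X ω, U ω)) inferInstance]
      =ᵐ[μ] C :=
    condExp_sub_ae_eq_of_condExp_ae_eq_add (hMm.prodMk (hAm.prodMk (hXm.prodMk hUm))).comap_le
      (hY.integrable one_le_two) (hMAXUm.fst.const_mul θ1).stronglyMeasurable
      ((hM.const_mul θ1).integrable one_le_two)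
      (hout.trans (.of_forall fun ω ↦ by simp only [C, Pi.add_apply]; ring))
  have hDC : μ[D * W | MeasurableSpace.comap (fun ω ↦ (M ω, A ω, X ω, U ω)) inferInstance]
      =ᵐ[μ] D * C :=
    (condExp_mul_of_stronglyMeasurable_left (hMAXUm.fst.stronglyMeasurable.sub
      ((hMAXUm.snd.fst.const_mul θ3).stronglyMeasurable.add
        (hHm.mono hMAXUm.snd.snd.fst.comap_le)))
      (hD.integrable_mul hW) (hW.integrable one_le_two)).trans (.mul .rfl hCW)
  have hk : μ[D | MeasurableSpace.comap (fun ω ↦ (A ω, X ω, U ω)) inferInstance]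
      =ᵐ[μ] fun ω ↦ h (X ω, U ω) - H ω :=
    condExp_sub_ae_eq_of_condExp_ae_eq_add (hAm.prodMk (hXm.prodMk hUm)).comap_le
      (hM.integrable one_le_two)
      ((hAXUm.fst.const_mul θ3).stronglyMeasurable.add (hHm.mono hAXUm.snd.fst.comap_le))
      ((hA.const_mul θ3).add hH |>.integrable one_le_two)
      (hmed.trans (.of_forall fun ω ↦ by simp only [Pi.add_apply]; ring))
  have hCk : μ[D * C | MeasurableSpace.comap (fun ω ↦ (A ω, X ω, U ω)) inferInstance]
      =ᵐ[μ] C * fun ω ↦ h (X ω, U ω) - H ω := by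
    rw [mul_comm]
    exact (condExp_mul_of_stronglyMeasurable_left
      ((hAXUm.fst.const_mul θ2).add
        (hg.comp (hAXUm.snd.fst.prodMk hAXUm.snd.snd))).stronglyMeasurable
      (hC.integrable_mul hD) (hD.integrable one_le_two)).trans (.mul .rfl hk)
  have hψ : (fun ω ↦ (M ω - θ3 * A ω - H ω) * (Y ω - θ1 * M ω)) = D * W := by
    ext ω; simp only [D, W, Pi.mul_apply, Pi.sub_apply]; ring
  rw [hψ]
  refine condExp_ae_eq_condExp_of_condExp_ae_eq (hMAXUm.snd.snd.fst.comap_le)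
    (hMAXUm.snd.fst.prodMk hMAXUm.snd.snd.fst).comap_le
    (hMm.prodMk (hAm.prodMk (hXm.prodMk hUm))).comap_le hDC ?_
  exact condExp_ae_eq_condExp_of_condExp_ae_eq (hAXUm.snd.fst.comap_le)
    (hAXUm.fst.prodMk hAXUm.snd.fst).comap_le (hAm.prodMk (hXm.prodMk hUm)).comap_le hCk
    (condExp_mul_centered_ae_eq hAm hXm hUm hAU hA hgi (hg.comp hXUm).stronglyMeasurable hhi
      (hh.comp hXUm).stronglyMeasurable θ2)

end PartiallyLinearModel

theorem stmt4_general {Ω 𝓧 𝓤 : Type*} {mΩ : MeasurableSpace Ω} [StandardBorelSpace Ω]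
    {m𝓧 : MeasurableSpace 𝓧} {m𝓤 : MeasurableSpace 𝓤}
    (μ : Measure Ω) [IsProbabilityMeasure μ]
    (Y A M : Ω → ℝ) (X : Ω → 𝓧) (U : Ω → 𝓤)
    (hAm : Measurable A) (hMm : Measurable M)
    (hXm : Measurable X) (hUm : Measurable U)
    (hY : MemLp Y 2 μ) (hA : MemLp A 2 μ) (hM : MemLp M 2 μ)
    (θ1 θ2 θ3 : ℝ) (g h : 𝓧 × 𝓤 → ℝ) (hg : Measurable g) (hh : Measurable h)
    (hgi : MemLp (fun ω => g (X ω, U ω)) 2 μ)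
    (hhi : MemLp (fun ω => h (X ω, U ω)) 2 μ)
    (hout : μ[Y | MeasurableSpace.comap (fun ω => (M ω, A ω, X ω, U ω)) inferInstance]
        =ᵐ[μ] fun ω => θ1 * M ω + θ2 * A ω + g (X ω, U ω))
    (hmed : μ[M | MeasurableSpace.comap (fun ω => (A ω, X ω, U ω)) inferInstance]
        =ᵐ[μ] fun ω => θ3 * A ω + h (X ω, U ω))
    (hAU : CondIndepFun (MeasurableSpace.comap X m𝓧) hXm.comap_le A U μ)
    (hstar : Ω → ℝ)
    (hhstar : hstar =ᵐ[μ] μ[fun ω => h (X ω, U ω) | MeasurableSpace.comap X m𝓧]) :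
    (μ[fun ω => Y ω - θ1 * M ω - θ2 * A ω
        | MeasurableSpace.comap (fun ω => (A ω, X ω)) inferInstance]
      =ᵐ[μ] μ[fun ω => Y ω - θ1 * M ω - θ2 * A ω | MeasurableSpace.comap X m𝓧])
    ∧ (μ[fun ω => (M ω - θ3 * A ω - hstar ω) * (Y ω - θ1 * M ω)
        | MeasurableSpace.comap (fun ω => (A ω, X ω)) inferInstance]
      =ᵐ[μ] μ[fun ω => (M ω - θ3 * A ω - hstar ω) * (Y ω - θ1 * M ω)
        | MeasurableSpace.comap X m𝓧])
    ∧ (μ[fun ω => M ω - θ3 * A ω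
        | MeasurableSpace.comap (fun ω => (A ω, X ω)) inferInstance]
      =ᵐ[μ] μ[fun ω => M ω - θ3 * A ω | MeasurableSpace.comap X m𝓧]) := by
  have hMAXUm := comap_measurable (m := (inferInstance : MeasurableSpace (ℝ × ℝ × 𝓧 × 𝓤)))
    (fun ω ↦ (M ω, A ω, X ω, U ω))
  have hAXUm := comap_measurable (m := (inferInstance : MeasurableSpace (ℝ × 𝓧 × 𝓤)))
    (fun ω ↦ (A ω, X ω, U ω))
  have hψ₂ : (fun ω ↦ (M ω - θ3 * A ω - hstar ω) * (Y ω - θ1 * M ω)) =ᵐ[μ]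
      fun ω ↦ (M ω - θ3 * A ω - μ[fun ω ↦ h (X ω, U ω) | MeasurableSpace.comap X m𝓧] ω)
        * (Y ω - θ1 * M ω) := by
    filter_upwards [hhstar] with ω hω
    rw [hω]
  have hψ₁ : (fun ω ↦ Y ω - θ1 * M ω - θ2 * A ω) = Y - fun ω ↦ θ1 * M ω + θ2 * A ω := by
    ext ω; simp only [Pi.sub_apply]; ring
  refine ⟨?_, ?_, ?_⟩
  · rw [hψ₁]
    exact condExp_residual_ae_eq_of_condExp_ae_eq_add hAm hXm hUm hAU
      (hMAXUm.snd.fst.prodMk hMAXUm.snd.snd.fst).comap_le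
      (hMm.prodMk (hAm.prodMk (hXm.prodMk hUm))).comap_le hg (hgi.integrable one_le_two)
      (hY.integrable one_le_two)
      ((hMAXUm.fst.const_mul θ1).add (hMAXUm.snd.fst.const_mul θ2)).stronglyMeasurable
      ((hM.const_mul θ1).add (hA.const_mul θ2) |>.integrable one_le_two) hout
  · exact (condExp_congr_ae hψ₂).trans <| (condExp_mediator_outcome_residual_ae_eq hAm hMm hXm hUm
      hAU hY hA hM θ1 θ2 θ3 hg hh hgi hhi hout hmed).trans (condExp_congr_ae hψ₂.symm)
  · exact condExp_residual_ae_eq_of_condExp_ae_eq_add hAm hXm hUm hAU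
      (hAXUm.fst.prodMk hAXUm.snd.fst).comap_le (hAm.prodMk (hXm.prodMk hUm)).comap_le hh
      (hhi.integrable one_le_two) (hM.integrable one_le_two)
      (hAXUm.fst.const_mul θ3).stronglyMeasurable ((hA.const_mul θ3).integrable one_le_two) hmed

/-- Lemma 2.1: with `ψ1 = Y − θ1·M − θ2·A`,
`ψ2 = (M − θ3·A − h*(X))·(Y − θ1·M)`, `ψ3 = M − θ3·A`, under the partially linear
models and `A ⊥ U | X`, `E(ψ|A,X) = E(ψ|X)` almost surely. -/
theorem stmt4 {Ω 𝓧 𝓤 : Type*} {mΩ : MeasurableSpace Ω} [StandardBorelSpace Ω] [Nonempty Ω]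
    {m𝓧 : MeasurableSpace 𝓧} {m𝓤 : MeasurableSpace 𝓤}
    (μ : Measure Ω) [IsProbabilityMeasure μ]
    (Y A M : Ω → ℝ) (X : Ω → 𝓧) (U : Ω → 𝓤)
    (hYm : Measurable Y) (hAm : Measurable A) (hMm : Measurable M)
    (hXm : Measurable X) (hUm : Measurable U)
    (hY : MemLp Y 2 μ) (hA : MemLp A 2 μ) (hM : MemLp M 2 μ)
    (θ1 θ2 θ3 : ℝ) (g h : 𝓧 × 𝓤 → ℝ) (hg : Measurable g) (hh : Measurable h)
    (hgi : MemLp (fun ω => g (X ω, U ω)) 2 μ)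
    (hhi : MemLp (fun ω => h (X ω, U ω)) 2 μ)
    (hout : μ[Y | MeasurableSpace.comap (fun ω => (M ω, A ω, X ω, U ω)) inferInstance]
        =ᵐ[μ] fun ω => θ1 * M ω + θ2 * A ω + g (X ω, U ω))
    (hmed : μ[M | MeasurableSpace.comap (fun ω => (A ω, X ω, U ω)) inferInstance]
        =ᵐ[μ] fun ω => θ3 * A ω + h (X ω, U ω))
    (hAU : CondIndepFun (MeasurableSpace.comap X m𝓧) hXm.comap_le A U μ)
    (hstar : Ω → ℝ)
    (hhstar : hstar =ᵐ[μ] μ[fun ω => h (X ω, U ω) | MeasurableSpace.comap X m𝓧]) :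
    (μ[fun ω => Y ω - θ1 * M ω - θ2 * A ω
        | MeasurableSpace.comap (fun ω => (A ω, X ω)) inferInstance]
      =ᵐ[μ] μ[fun ω => Y ω - θ1 * M ω - θ2 * A ω | MeasurableSpace.comap X m𝓧])
    ∧ (μ[fun ω => (M ω - θ3 * A ω - hstar ω) * (Y ω - θ1 * M ω)
        | MeasurableSpace.comap (fun ω => (A ω, X ω)) inferInstance]
      =ᵐ[μ] μ[fun ω => (M ω - θ3 * A ω - hstar ω) * (Y ω - θ1 * M ω)
        | MeasurableSpace.comap X m𝓧])
    ∧ (μ[fun ω => M ω - θ3 * A ω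
        | MeasurableSpace.comap (fun ω => (A ω, X ω)) inferInstance]
      =ᵐ[μ] μ[fun ω => M ω - θ3 * A ω | MeasurableSpace.comap X m𝓧]) :=
  stmt4_general (mΩ := mΩ) (m𝓤 := m𝓤) μ Y A M X U hAm hMm hXm hUm hY hA hM θ1 θ2 θ3 g h hg hh hgi
    hhi hout hmed hAU hstar hhstar
end

section
/- Under the partially linear models with exposure-mediator interaction E(Y|M,A,X,U)=θ1M+θ2A+ζAM+g(X,U) and E(M|A,X,U)=θ3A+h(X,U) together with latent sequential ignorability, the natural mediation effects are NDE(a,a') = [θ2 + ζ(θ3 a' + E(h*(X)))](a−a') and NIE(a,a') = θ3(θ1 + ζa)(a−a'), where h*(X)=E(h(X,U)|X). -/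
open MeasureTheory ProbabilityTheory

/-! Both outcome regressions are affine in the mediator `m`, so each inner integral only sees the
mediator mean `θ3 * a + h w`. For the NDE the integrand is `ζ (a - a') m + θ2 (a - a')`, leaving
`E h` after the outer integral; for the NIE the terms `θ2 a + g w` cancel and the difference of
the two inner integrals is the constant `θ3 (θ1 + ζ a) (a - a')`. -/

theorem integral_mul_add_const_of_isProbabilityMeasure {α : Type*} [MeasurableSpace α]
    {μ : Measure α} [IsProbabilityMeasure μ] {f : α → ℝ} (hf : Integrable f μ) (c d : ℝ) :
    ∫ x, (c * f x + d) ∂μ = c * ∫ x, f x ∂μ + d := by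
  rw [integral_add (hf.const_mul c) (integrable_const d), integral_const_mul, integral_const,
    probReal_univ, one_smul]

theorem stmt14_general {𝓦 : Type*} [MeasurableSpace 𝓦]
    (ν : Measure 𝓦) [IsProbabilityMeasure ν]
    (κ : ℝ → 𝓦 → Measure ℝ) [∀ a w, IsProbabilityMeasure (κ a w)]
    (θ1 θ2 θ3 ζ : ℝ) (g h : 𝓦 → ℝ)
    (hh : Integrable h ν)
    (hκint : ∀ a w, Integrable id (κ a w))
    (hmean : ∀ a w, ∫ m, m ∂(κ a w) = θ3 * a + h w)
    (a a' : ℝ) :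
    -- NDE(a,a') = ∬ [E(Y|a,m,w) − E(Y|a',m,w)] f(m|a',w) f(w) dm dw
    (∫ w, (∫ m, ((θ1 * m + θ2 * a + ζ * a * m + g w)
          - (θ1 * m + θ2 * a' + ζ * a' * m + g w)) ∂(κ a' w)) ∂ν
      = (θ2 + ζ * (θ3 * a' + ∫ w, h w ∂ν)) * (a - a'))
    -- NIE(a,a') = ∬ E(Y|a,m,w) [f(m|a,w) − f(m|a',w)] f(w) dm dw
    ∧ (∫ w, ((∫ m, (θ1 * m + θ2 * a + ζ * a * m + g w) ∂(κ a w))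
          - (∫ m, (θ1 * m + θ2 * a + ζ * a * m + g w) ∂(κ a' w))) ∂ν
      = θ3 * (θ1 + ζ * a) * (a - a')) := by
  have mediator_affine : ∀ b w (c d : ℝ), ∫ m, (c * m + d) ∂(κ b w) = c * (θ3 * b + h w) + d :=
    fun b w c d => by
      rw [integral_mul_add_const_of_isProbabilityMeasure (f := fun m => m) (hκint b w), hmean]
  constructor
  · have nde_inner : ∀ w, ∫ m, ((θ1 * m + θ2 * a + ζ * a * m + g w)
          - (θ1 * m + θ2 * a' + ζ * a' * m + g w)) ∂(κ a' w)
        = ζ * (a - a') * h w + (ζ * (a - a') * (θ3 * a') + θ2 * (a - a')) := fun w => by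
      simp_rw [show ∀ m, (θ1 * m + θ2 * a + ζ * a * m + g w)
          - (θ1 * m + θ2 * a' + ζ * a' * m + g w) = ζ * (a - a') * m + θ2 * (a - a') by
        intro m; ring]
      rw [mediator_affine]; ring
    simp_rw [nde_inner]
    rw [integral_mul_add_const_of_isProbabilityMeasure hh]; ring
  · have nie_inner : ∀ b w, ∫ m, (θ1 * m + θ2 * a + ζ * a * m + g w) ∂(κ b w)
        = (θ1 + ζ * a) * (θ3 * b + h w) + (θ2 * a + g w) := fun b w => by
      simp_rw [show ∀ m, θ1 * m + θ2 * a + ζ * a * m + g w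
          = (θ1 + ζ * a) * m + (θ2 * a + g w) by intro m; ring]
      exact mediator_affine b w _ _
    simp_rw [nie_inner]
    exact integral_eq_const (ae_of_all _ fun w => by ring)

/-- with exposure–mediator interaction,
`E(Y|a,m,w) = θ1·m + θ2·a + ζ·a·m + g(w)` and conditional mediator law `κ a w` with
mean `θ3·a + h(w)`, the mediation functionals are
`NDE(a,a') = [θ2 + ζ(θ3·a' + E h*(X))](a−a')` and `NIE(a,a') = θ3(θ1 + ζa)(a−a')`. -/
theorem stmt14 {𝓦 : Type*} [MeasurableSpace 𝓦]
    (ν : Measure 𝓦) [IsProbabilityMeasure ν]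
    (κ : ℝ → 𝓦 → Measure ℝ) [∀ a w, IsProbabilityMeasure (κ a w)]
    (θ1 θ2 θ3 ζ : ℝ) (g h : 𝓦 → ℝ)
    (hg : Integrable g ν) (hh : Integrable h ν)
    (hκint : ∀ a w, Integrable id (κ a w))
    (hmean : ∀ a w, ∫ m, m ∂(κ a w) = θ3 * a + h w)
    (a a' : ℝ) :
    -- NDE(a,a') = ∬ [E(Y|a,m,w) − E(Y|a',m,w)] f(m|a',w) f(w) dm dw
    (∫ w, (∫ m, ((θ1 * m + θ2 * a + ζ * a * m + g w)
          - (θ1 * m + θ2 * a' + ζ * a' * m + g w)) ∂(κ a' w)) ∂ν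
      = (θ2 + ζ * (θ3 * a' + ∫ w, h w ∂ν)) * (a - a'))
    -- NIE(a,a') = ∬ E(Y|a,m,w) [f(m|a,w) − f(m|a',w)] f(w) dm dw
    ∧ (∫ w, ((∫ m, (θ1 * m + θ2 * a + ζ * a * m + g w) ∂(κ a w))
          - (∫ m, (θ1 * m + θ2 * a + ζ * a * m + g w) ∂(κ a' w))) ∂ν
      = θ3 * (θ1 + ζ * a) * (a - a')) :=
  stmt14_general ν κ θ1 θ2 θ3 ζ g h hh hκint hmean a a'
end

section
/- Under the log-linear binary mediator model and linear outcome model of the previous statement, with A ⊥ U | X, the mediation functionals satisfy NDE(a,a')=θ2·(a−a') and NIE(a,a')=θ1·(exp(θ3·a)−exp(θ3·a'))·E[h̃(X)], where h̃(X)=E[exp(h(X,U))|X]. -/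
open MeasureTheory ProbabilityTheory

/-! Under a linear outcome model the outcome contrast between exposures does not depend on the
mediator, so the NDE integrand is the constant `θ2 (a - a')`; the NIE integrand collapses to
`θ1` times the change in `P(M = 1)`, which under the log-linear mediator model factors as
`(exp (θ3 a) - exp (θ3 a')) · exp (h w)`. -/

lemma linear_outcome_direct_contrast (θ1 θ2 a a' c p : ℝ) :
    ((θ1 * 1 + θ2 * a + c) - (θ1 * 1 + θ2 * a' + c)) * p
      + ((θ1 * 0 + θ2 * a + c) - (θ1 * 0 + θ2 * a' + c)) * (1 - p) = θ2 * (a - a') := by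
  ring

lemma linear_outcome_indirect_contrast (θ1 θ2 a c p q : ℝ) :
    (θ1 * 1 + θ2 * a + c) * (p - q) + (θ1 * 0 + θ2 * a + c) * ((1 - p) - (1 - q))
      = θ1 * (p - q) := by
  ring

lemma exp_add_sub_exp_add (x y z : ℝ) :
    Real.exp (x + z) - Real.exp (y + z) = (Real.exp x - Real.exp y) * Real.exp z := by
  rw [Real.exp_add, Real.exp_add]
  ring

theorem stmt16_general {𝓦 : Type*} [MeasurableSpace 𝓦]
    (ν : Measure 𝓦) [IsProbabilityMeasure ν]
    (θ1 θ2 θ3 : ℝ) (g h : 𝓦 → ℝ)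
    (a a' : ℝ) :
    -- NDE(a,a') = Σ_m [E(Y|a,m,w) − E(Y|a',m,w)]·P(M=m|a',w) integrated over ν
    (∫ w, (((θ1 * 1 + θ2 * a + g w) - (θ1 * 1 + θ2 * a' + g w))
            * Real.exp (θ3 * a' + h w)
          + ((θ1 * 0 + θ2 * a + g w) - (θ1 * 0 + θ2 * a' + g w))
            * (1 - Real.exp (θ3 * a' + h w))) ∂ν
      = θ2 * (a - a'))
    -- NIE(a,a') = Σ_m E(Y|a,m,w)·[P(M=m|a,w) − P(M=m|a',w)] integrated over ν
    ∧ (∫ w, ((θ1 * 1 + θ2 * a + g w)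
            * (Real.exp (θ3 * a + h w) - Real.exp (θ3 * a' + h w))
          + (θ1 * 0 + θ2 * a + g w)
            * ((1 - Real.exp (θ3 * a + h w)) - (1 - Real.exp (θ3 * a' + h w)))) ∂ν
      = θ1 * (Real.exp (θ3 * a) - Real.exp (θ3 * a')) * ∫ w, Real.exp (h w) ∂ν) := by
  constructor
  · simp only [linear_outcome_direct_contrast, integral_const, probReal_univ, one_smul]
  · simp only [linear_outcome_indirect_contrast]
    simp only [exp_add_sub_exp_add, ← mul_assoc, integral_const_mul]

/-- under the log-linear binary mediator model
`P(M=1|a,w) = exp(θ3·a + h(w))` and linear outcome model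
`E(Y|m,a,w) = θ1·m + θ2·a + g(w)`, with `ν` the law of `(X,U)`, the mediation
functionals satisfy `NDE(a,a') = θ2·(a−a')` and
`NIE(a,a') = θ1·(exp(θ3·a) − exp(θ3·a'))·E[h̃(X)]` where `E[h̃(X)] = E[exp(h(X,U))]`. -/
theorem stmt16 {𝓦 : Type*} [MeasurableSpace 𝓦]
    (ν : Measure 𝓦) [IsProbabilityMeasure ν]
    (θ1 θ2 θ3 : ℝ) (g h : 𝓦 → ℝ)
    (hg : Integrable g ν)
    (hhe : Integrable (fun w => Real.exp (h w)) ν)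
    (hghe : Integrable (fun w => g w * Real.exp (h w)) ν)
    (a a' : ℝ)
    -- valid probabilities at the exposure levels considered
    (hp : ∀ b ∈ ({a, a'} : Set ℝ), ∀ w, Real.exp (θ3 * b + h w) ≤ 1) :
    -- NDE(a,a') = Σ_m [E(Y|a,m,w) − E(Y|a',m,w)]·P(M=m|a',w) integrated over ν
    (∫ w, (((θ1 * 1 + θ2 * a + g w) - (θ1 * 1 + θ2 * a' + g w))
            * Real.exp (θ3 * a' + h w)
          + ((θ1 * 0 + θ2 * a + g w) - (θ1 * 0 + θ2 * a' + g w))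
            * (1 - Real.exp (θ3 * a' + h w))) ∂ν
      = θ2 * (a - a'))
    -- NIE(a,a') = Σ_m E(Y|a,m,w)·[P(M=m|a,w) − P(M=m|a',w)] integrated over ν
    ∧ (∫ w, ((θ1 * 1 + θ2 * a + g w)
            * (Real.exp (θ3 * a + h w) - Real.exp (θ3 * a' + h w))
          + (θ1 * 0 + θ2 * a + g w)
            * ((1 - Real.exp (θ3 * a + h w)) - (1 - Real.exp (θ3 * a' + h w)))) ∂ν
      = θ1 * (Real.exp (θ3 * a) - Real.exp (θ3 * a')) * ∫ w, Real.exp (h w) ∂ν) :=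
  stmt16_general ν θ1 θ2 θ3 g h a a'
end
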